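/- For any smooth symmetric matrix field κ on ℝ³, the identity (M L* L κ)_i = -(1/2) ∂^l ∂_{(i}(Mκ)_{l)} holds, where (Lκ)_{lji}=∂_{[l}κ_{j]i}, (L*w)_{ij}=-∂^l w_{l(ij)}, and (Mu)_i = ∂^l u_{il} - ∂_i u^l_l. -/

import Mathlib

/-- Partial derivative `∂ᵢ f` of a scalar field on ℝ³ (coordinates `Fin 3 → ℝ`). -/
noncomputable def pd (i : Fin 3) (f : (Fin 3 → ℝ) → ℝ) (x : Fin 3 → ℝ) : ℝ :=
  fderiv ℝ f x (Pi.single i 1)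

/-- Kronecker delta. -/
def kd (i j : Fin 3) : ℝ := if i = j then 1 else 0

/-- `(Lu)_{lji} = ∂_{[l} u_{j]i}`. -/
noncomputable def Lop (u : (Fin 3 → ℝ) → Fin 3 → Fin 3 → ℝ)
    (l j i : Fin 3) (x : Fin 3 → ℝ) : ℝ :=
  (pd l (fun y => u y j i) x - pd j (fun y => u y l i) x) / 2

/-- `(L*w)_{ij} = -∂^l w_{l(ij)}`. -/
noncomputable def Lstar (w : (Fin 3 → ℝ) → Fin 3 → Fin 3 → Fin 3 → ℝ)
    (i j : Fin 3) (x : Fin 3 → ℝ) : ℝ :=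
  -∑ l, pd l (fun y => (w y l i j + w y l j i) / 2) x

/-- `(Mu)_i = ∂^l u_{il} - ∂_i u^l_l`. -/
noncomputable def Mop (u : (Fin 3 → ℝ) → Fin 3 → Fin 3 → ℝ)
    (i : Fin 3) (x : Fin 3 → ℝ) : ℝ :=
  (∑ l, pd l (fun y => u y i l) x) - pd i (fun y => ∑ l, u y l l) x

/-- Linearized Ricci operator `P`. -/
noncomputable def Pop (u : (Fin 3 → ℝ) → Fin 3 → Fin 3 → ℝ)
    (i j : Fin 3) (x : Fin 3 → ℝ) : ℝ :=
  (1 / 2) * (pd i (fun y => ∑ l, pd l (fun z => u z l j) y) x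
    + pd j (fun y => ∑ l, pd l (fun z => u z l i) y) x
    - (∑ l, pd l (fun y => pd l (fun z => u z i j) y) x)
    - pd i (fun y => pd j (fun z => ∑ l, u z l l) y) x)

/-- `pd` of a smooth function is smooth. -/
@[fun_prop]
theorem pd_contDiff {f : (Fin 3 → ℝ) → ℝ} (hf : ContDiff ℝ (⊤ : ℕ∞) f) (i : Fin 3) :
    ContDiff ℝ (⊤ : ℕ∞) (pd i f) :=
  (hf.fderiv_right (by simp)).clm_apply contDiff_const

@[fun_prop]
theorem pd_differentiable {f : (Fin 3 → ℝ) → ℝ} (hf : ContDiff ℝ (⊤ : ℕ∞) f) (i : Fin 3) :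
    Differentiable ℝ (pd i f) :=
  (pd_contDiff hf i).differentiable (by simp)

theorem pd_add {f g : (Fin 3 → ℝ) → ℝ} (hf : Differentiable ℝ f) (hg : Differentiable ℝ g)
    (i : Fin 3) :
    pd i (fun y => f y + g y) = fun x => pd i f x + pd i g x := by
  funext x; unfold pd; rw [fderiv_fun_add (hf x) (hg x)]; simp

theorem pd_sub {f g : (Fin 3 → ℝ) → ℝ} (hf : Differentiable ℝ f) (hg : Differentiable ℝ g)
    (i : Fin 3) :
    pd i (fun y => f y - g y) = fun x => pd i f x - pd i g x := by
  funext x; unfold pd; rw [fderiv_fun_sub (hf x) (hg x)]; simp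

theorem pd_div_const {f : (Fin 3 → ℝ) → ℝ} (hf : Differentiable ℝ f) (c : ℝ)
    (i : Fin 3) :
    pd i (fun y => f y / c) = fun x => pd i f x / c := by
  funext x; unfold pd
  have : (fun y => f y / c) = fun y => c⁻¹ • f y := by funext y; simp [div_eq_inv_mul]
  rw [this, fderiv_fun_const_smul (hf x)]
  simp [div_eq_inv_mul]

theorem pd_neg (f : (Fin 3 → ℝ) → ℝ) (i : Fin 3) :
    pd i (fun y => -f y) = fun x => -pd i f x := by
  funext x; unfold pd; rw [fderiv_fun_neg]; simp

/-- Clairaut: second partial derivatives of a smooth function commute. -/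
theorem pd_comm {f : (Fin 3 → ℝ) → ℝ} (hf : ContDiff ℝ (⊤ : ℕ∞) f) (a b : Fin 3) :
    pd a (pd b f) = pd b (pd a f) := by
  funext x
  have hd : ∀ y, HasFDerivAt f (fderiv ℝ f y) y :=
    fun y => (hf.differentiable (by simp) y).hasFDerivAt
  have hdd : HasFDerivAt (fderiv ℝ f) (fderiv ℝ (fderiv ℝ f) x) x :=
    (((hf.fderiv_right (m := (⊤ : ℕ∞)) (by simp)).differentiable (by simp)) x).hasFDerivAt
  have hsymm := second_derivative_symmetric hd hdd (Pi.single a 1) (Pi.single b 1)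
  have h1 : ∀ (u v : Fin 3),
      pd u (pd v f) x = fderiv ℝ (fderiv ℝ f) x (Pi.single u 1) (Pi.single v 1) := by
    intro u v
    unfold pd
    rw [fderiv_clm_apply ((hf.fderiv_right (m := (⊤ : ℕ∞)) (by simp)).differentiable (by simp) x)
      (differentiableAt_const _)]
    simp
  rw [h1, h1, hsymm]

set_option maxHeartbeats 2000000 in
theorem M_LstarL_identity (κ : (Fin 3 → ℝ) → Fin 3 → Fin 3 → ℝ)
    (hκ : ∀ i j, ContDiff ℝ (⊤ : ℕ∞) fun x => κ x i j)
    (hsym : ∀ x i j, κ x i j = κ x j i) :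
    ∀ (x : Fin 3 → ℝ) (i : Fin 3),
      Mop (fun y a b => Lstar (fun z l c d => Lop κ l c d z) a b y) i x =
        -(1 / 2) * ∑ l, pd l (fun y =>
            (pd i (fun z => Mop κ l z) y + pd l (fun z => Mop κ i z) y) / 2) x := by
  intro x i
  have hκd : ∀ p q, Differentiable ℝ fun y => κ y p q := fun p q => (hκ p q).differentiable (by simp)
  have Csym : ∀ p q : Fin 3, q < p → (fun z => κ z p q) = (fun z => κ z q p) := by
    intro p q _; funext z; exact hsym z p q
  have C1 : ∀ (p q a b : Fin 3), b < a →
      pd a (pd b (fun z => κ z p q)) = pd b (pd a (fun z => κ z p q)) :=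
    fun p q a b _ => pd_comm (hκ p q) a b
  have C2 : ∀ (p q a b c : Fin 3), b < a →
      pd a (pd b (pd c (fun z => κ z p q))) = pd b (pd a (pd c (fun z => κ z p q))) :=
    fun p q a b c _ => pd_comm (pd_contDiff (hκ p q) c) a b
  fin_cases i <;>
  · simp only [Mop, Lstar, Lop, Fin.sum_univ_three, Fin.reduceFinMk, Fin.isValue]
    simp (disch := fun_prop) only [pd_add, pd_sub, pd_div_const, pd_neg]
    simp (disch := decide) only [Csym, C1, C2]
    ring
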